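/- Let p ≥ 1, let I₀ and I₁ be disjoint finite index sets, and let x^(i) ∈ ℝ^p for each i ∈ I₀ ∪ I₁. For every point x̄ ∈ ℝ^p the following are equivalent: (1) for every a ∈ ℝ^p and b ∈ ℝ such that ⟪a, x^(i)⟫ − b ≤ 0 for all i ∈ I₀ and ⟪a, x^(i)⟫ − b ≥ 0 for all i ∈ I₁, one has ⟪a, x̄⟫ − b ≤ 0; (2) there exists u : I₀ ∪ I₁ → ℝ with u_i ≥ 0 for all i, such that Σ_{i∈I₀} u_i − Σ_{i∈I₁} u_i = 1 and Σ_{i∈I₀} u_i • x^(i) − Σ_{i∈I₁} u_i • x^(i) = x̄. (This is the characterization of the 'No' region induced by factual queries.) -/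

import Mathlib

/-!
Lift each point `y` to `(y, 1)` and flip the sign of the lifted `Yes` points. A classifier
`(a, b)` then becomes the linear functional `(y, t) ↦ b t - ⟪a, y⟫`, and it is consistent with the
queries exactly when this functional is nonnegative on all the signed lifted points. Condition (2)
says that `(x̄, 1)` lies in the cone generated by those points, so the equivalence is Farkas'
lemma: a point outside a closed convex cone is separated from it by a linear functional. The cone
of a finite family is closed by the conic Carathéodory argument: a linearly dependent family can
drop a generator, and the cone of a linearly independent family is the image of the closed
orthant under a closed embedding.
-/

open Finset

section LinearOrderedField

variable {𝕜 E ι : Type*} [Field 𝕜] [LinearOrder 𝕜] [IsStrictOrderedRing 𝕜]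
  [AddCommGroup E] [Module 𝕜 E] [Fintype ι]

theorem exists_zero_coeff_nonneg_sum_smul_eq_of_not_linearIndependent {v : ι → E}
    (hv : ¬LinearIndependent 𝕜 v) {c : ι → 𝕜} (hc : 0 ≤ c) :
    ∃ j, ∃ c' : ι → 𝕜, 0 ≤ c' ∧ c' j = 0 ∧ ∑ i, c' i • v i = ∑ i, c i • v i := by
  classical
  obtain ⟨d, hd, hpos⟩ : ∃ d : ι → 𝕜, ∑ i, d i • v i = 0 ∧ ∃ i, 0 < d i := by
    obtain ⟨g, hg, i, hi⟩ := Fintype.not_linearIndependent_iff.mp hv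
    rcases hi.lt_or_gt with hneg | hpos
    · exact ⟨-g, by simp [hg], i, neg_pos.mpr hneg⟩
    · exact ⟨g, hg, i, hpos⟩
  -- Move from `c` along `-d` until the first coefficient hits zero.
  obtain ⟨j, hj, hmin⟩ := ({i | 0 < d i} : Finset ι).exists_min_image (fun i => c i / d i)
    (by simpa [Finset.Nonempty] using hpos)
  rw [mem_filter_univ] at hj
  set t := c j / d j
  refine ⟨j, c - t • d, fun i => ?_, by simp [t, hj.ne'], ?_⟩
  · simp only [Pi.zero_apply, Pi.sub_apply, Pi.smul_apply, smul_eq_mul, sub_nonneg]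
    rcases lt_or_ge 0 (d i) with hdi | hdi
    · exact (le_div_iff₀ hdi).mp (hmin i (by simpa using hdi))
    · exact (mul_nonpos_of_nonneg_of_nonpos (div_nonneg (hc j) hj.le) hdi).trans (hc i)
  · simp [sub_smul, sum_sub_distrib, mul_smul, ← smul_sum, hd]

theorem image_linearCombination_Ici_eq_iUnion [DecidableEq ι] {v : ι → E}
    (hv : ¬LinearIndependent 𝕜 v) :
    Fintype.linearCombination 𝕜 v '' Set.Ici 0 =
      ⋃ j, Fintype.linearCombination 𝕜 (fun i : {i // i ≠ j} => v i.1) '' Set.Ici 0 := by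
  ext z
  simp only [Set.mem_image, Set.mem_Ici, Set.mem_iUnion, Fintype.linearCombination_apply]
  constructor
  · rintro ⟨c, hc, rfl⟩
    obtain ⟨j, c', hc', hc'j, hsum⟩ :=
      exists_zero_coeff_nonneg_sum_smul_eq_of_not_linearIndependent hv hc
    refine ⟨j, fun i => c' i, fun i => hc' i, ?_⟩
    rw [← hsum, Fintype.sum_eq_add_sum_subtype_ne _ j, hc'j, zero_smul, zero_add]
  · rintro ⟨j, c, hc, rfl⟩
    refine ⟨fun i => if h : i = j then 0 else c ⟨i, h⟩, fun i => ?_, ?_⟩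
    · by_cases h : i = j
      · simp [h]
      · simpa [h] using hc ⟨i, h⟩
    · rw [Fintype.sum_eq_add_sum_subtype_ne _ j]
      simp only [↓reduceDIte, zero_smul, zero_add]
      exact sum_congr rfl fun i _ => by rw [dif_neg i.2]

end LinearOrderedField

section TopologicalVectorSpace

variable {ι E : Type*} [AddCommGroup E] [Module ℝ E] [TopologicalSpace E]
  [IsTopologicalAddGroup E] [ContinuousSMul ℝ E] [T2Space E]

theorem isClosed_image_linearCombination_Ici [Fintype ι] (v : ι → E) :
    IsClosed (Fintype.linearCombination ℝ v '' Set.Ici 0) := by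
  classical
  induction h : Fintype.card ι using Nat.strong_induction_on generalizing ι with
  | _ n ih =>
  by_cases hv : LinearIndependent ℝ v
  · have hker : LinearMap.ker (Fintype.linearCombination ℝ v) = ⊥ :=
      LinearMap.ker_eq_bot.mpr (linearIndependent_iff_injective_fintypeLinearCombination.mp hv)
    exact (LinearMap.isClosedEmbedding_of_injective hker).isClosedMap _ isClosed_Ici
  · rw [image_linearCombination_Ici_eq_iUnion hv]
    exact isClosed_iUnion_of_finite fun j =>
      ih _ (h ▸ Fintype.card_subtype_lt (p := (· ≠ j)) (x := j) (by simp)) _ rfl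

theorem exists_nonneg_sum_smul_eq_iff [LocallyConvexSpace ℝ E] (s : Finset ι) (v : ι → E)
    (z : E) :
    (∃ c : ι → ℝ, (∀ i ∈ s, 0 ≤ c i) ∧ ∑ i ∈ s, c i • v i = z) ↔
      ∀ f : StrongDual ℝ E, (∀ i ∈ s, 0 ≤ f (v i)) → 0 ≤ f z := by
  classical
  constructor
  · rintro ⟨c, hc, rfl⟩ f hf
    simp only [map_sum, map_smul, smul_eq_mul]
    exact sum_nonneg fun i hi => mul_nonneg (hc i hi) (hf i hi)
  · intro hz
    by_contra hzs
    let C : ProperCone ℝ E :=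
      ⟨(PointedCone.positive ℝ (s → ℝ)).map (Fintype.linearCombination ℝ fun i : s => v i),
        isClosed_image_linearCombination_Ici _⟩
    have hC : ∀ y, y ∈ C ↔ ∃ c : s → ℝ, 0 ≤ c ∧ ∑ i, c i • v i = y := by
      intro y
      change y ∈ PointedCone.map _ _ ↔ _
      simp [PointedCone.mem_map, Fintype.linearCombination_apply]
    have hzC : z ∉ C := by
      rw [hC]
      rintro ⟨c, hc, rfl⟩
      refine hzs ⟨fun i => if h : i ∈ s then c ⟨i, h⟩ else 0,
        fun i hi => by simpa [hi] using hc ⟨i, hi⟩, ?_⟩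
      rw [← sum_coe_sort s]
      exact sum_congr rfl fun i _ => by simp
    have hvC : ∀ i ∈ s, v i ∈ C := fun i hi =>
      (hC _).mpr ⟨Pi.single ⟨i, hi⟩ 1, by simp [Pi.single_nonneg], by simp [Pi.single_apply]⟩
    obtain ⟨f, hfC, hfz⟩ := C.hyperplane_separation_point hzC
    exact hfz.not_ge (hz f fun i hi => hfC _ (hvC i hi))

end TopologicalVectorSpace

theorem Finset.sum_union_ite_neg {ι M : Type*} [AddCommGroup M] [DecidableEq ι]
    {s t : Finset ι} (hst : Disjoint s t) (f : ι → M) :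
    ∑ i ∈ s ∪ t, (if i ∈ s then f i else -f i) = ∑ i ∈ s, f i - ∑ i ∈ t, f i := by
  rw [sum_union hst, sub_eq_add_neg, ← sum_neg_distrib]
  congr 1
  · exact sum_congr rfl fun i hi => if_pos hi
  · exact sum_congr rfl fun i hi => if_neg (disjoint_right.mp hst hi)

def classifierFunctional {p : ℕ} (a : Fin p → ℝ) (b : ℝ) : StrongDual ℝ ((Fin p → ℝ) × ℝ) :=
  b • ContinuousLinearMap.snd ℝ _ ℝ -
    (∑ k, a k • ContinuousLinearMap.proj k).comp (ContinuousLinearMap.fst ℝ _ ℝ)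

@[simp]
theorem classifierFunctional_apply {p : ℕ} (a y : Fin p → ℝ) (b t : ℝ) :
    classifierFunctional a b (y, t) = b * t - ∑ k, a k * y k := by
  simp [classifierFunctional]

theorem classifierFunctional_surjective {p : ℕ} :
    Function.Surjective (Function.uncurry (classifierFunctional (p := p))) := by
  intro f
  refine ⟨(fun k => -f (Pi.single k 1, 0), f (0, 1)), ContinuousLinearMap.ext fun ⟨y, t⟩ => ?_⟩
  have hy : (y, t) = ∑ k, y k • (Pi.single k 1, 0) + t • (0, 1) := by
    ext k <;> simp [Prod.fst_sum, Prod.snd_sum, Finset.sum_apply, Pi.single_apply]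
  rw [Function.uncurry_apply_pair, classifierFunctional_apply, hy]
  simp only [map_add, map_sum, map_smul, smul_eq_mul]
  simp [mul_comm, add_comm]

theorem no_region_characterization {p : ℕ} {ι : Type*} [DecidableEq ι]
    (I₀ I₁ : Finset ι) (hdisj : Disjoint I₀ I₁)
    (x : ι → (Fin p → ℝ)) (xbar : Fin p → ℝ) :
    ((∀ (a : Fin p → ℝ) (b : ℝ),
        (∀ i ∈ I₀, (∑ k, a k * x i k) - b ≤ 0) →
        (∀ i ∈ I₁, (∑ k, a k * x i k) - b ≥ 0) →
        (∑ k, a k * xbar k) - b ≤ 0)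
      ↔ (∃ u : ι → ℝ, (∀ i ∈ I₀ ∪ I₁, 0 ≤ u i) ∧
          (∑ i ∈ I₀, u i) - (∑ i ∈ I₁, u i) = 1 ∧
          (∑ i ∈ I₀, u i • x i) - (∑ i ∈ I₁, u i • x i) = xbar)) := by
  let w : ι → (Fin p → ℝ) × ℝ := fun i => if i ∈ I₀ then (x i, 1) else -(x i, 1)
  have hw : ∀ u : ι → ℝ, ∑ i ∈ I₀ ∪ I₁, u i • w i =
      (∑ i ∈ I₀, u i • x i - ∑ i ∈ I₁, u i • x i, ∑ i ∈ I₀, u i - ∑ i ∈ I₁, u i) := by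
    intro u
    simp only [w, smul_ite, smul_neg]
    rw [sum_union_ite_neg hdisj]
    ext <;> simp [Prod.fst_sum, Prod.snd_sum]
  calc
    _ ↔ ∀ f : StrongDual ℝ ((Fin p → ℝ) × ℝ),
          (∀ i ∈ I₀ ∪ I₁, 0 ≤ f (w i)) → 0 ≤ f (xbar, 1) := by
      simp only [classifierFunctional_surjective.forall, Prod.forall, Function.uncurry_apply_pair,
        forall_mem_union, and_imp]
      refine forall₂_congr fun a b => imp_congr (forall₂_congr fun i hi => ?_) <|
        imp_congr (forall₂_congr fun i hi => ?_) ?_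
      · simp [w, hi]
      · simp [w, disjoint_right.mp hdisj hi]
      · simp
    _ ↔ ∃ u : ι → ℝ, (∀ i ∈ I₀ ∪ I₁, 0 ≤ u i) ∧ ∑ i ∈ I₀ ∪ I₁, u i • w i = (xbar, 1) :=
      (exists_nonneg_sum_smul_eq_iff _ _ _).symm
    _ ↔ _ := by simp only [hw, Prod.ext_iff, and_comm]
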